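/- arXiv:2004.04347 — 2 statements merged into one kernel-verified Lean document; each statement's English description precedes it below -/
import Mathlib

section
/- Let f : Δ → [0,1] be a finitely irreducible non-uniformly expanding Markov map such that at least one partition element Δ_b has nonempty interior. Then inf_{ω ∈ E*} diam( f^{|ω|}(Δ_ω) ) > 0, where |ω| denotes the length of the word ω; equivalently, inf_{a ∈ S} diam(f(Δ_a)) > 0. -/
/-!
Join an arbitrary letter `a` to `b` by a word `λ` of the finite set `Λ`. Along the admissible
word `a λ b` every step satisfies `Δ_{next} ⊆ f(Δ_{current})`, and the derivative is bounded by
some `K ≥ 1` on the finitely many letters occurring in `Λ`, so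
`diam Δ_b ≤ K^{|λ|} · diam f(Δ_a) ≤ K^m · diam f(Δ_a)`, with `m` the maximal length of a word
of `Λ`. For an admissible word `ω` the same inclusions give `f^{|ω|}(Δ_ω) = f(Δ_{ω_{|ω|-1}})`,
which reduces cylinders to single letters.
-/

open Filter MeasureTheory Set

/-- A Markov map of the interval `[0,1]` with countably many branches indexed by `S`:
a family `{Δ_a}` of nonempty connected subsets of `[0,1]` with pairwise disjoint
interiors, a map `f` whose restriction to each `Δ_a` is a C¹ diffeomorphism onto its
image with bounded derivative (the branch derivative is `f' a`), mapping into `[0,1]`,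
and satisfying the Markov property: if `f(Δ_a) ∩ Δ_b` has nonempty interior then
`f(Δ_a) ⊇ Δ_b`. -/
structure MarkovMap (S : Type) where
  Δ : S → Set ℝ
  f : ℝ → ℝ
  f' : S → ℝ → ℝ
  nonempty : ∀ a, (Δ a).Nonempty
  subset_unit : ∀ a, Δ a ⊆ Set.Icc 0 1
  conn : ∀ a, IsPreconnected (Δ a)
  disj_int : Pairwise fun a b => interior (Δ a) ∩ interior (Δ b) = ∅
  maps_unit : ∀ a, Set.MapsTo f (Δ a) (Set.Icc 0 1)
  inj : ∀ a, Set.InjOn f (Δ a)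
  hasDeriv : ∀ a, ∀ x ∈ Δ a, HasDerivWithinAt f (f' a x) (Δ a) x
  derivCont : ∀ a, ContinuousOn (f' a) (Δ a)
  derivNe : ∀ a, ∀ x ∈ Δ a, f' a x ≠ 0
  derivBdd : ∀ a, ∃ C : ℝ, ∀ x ∈ Δ a, |f' a x| ≤ C
  markov : ∀ a b, (interior (f '' Δ a ∩ Δ b)).Nonempty → Δ b ⊆ f '' Δ a

namespace MarkovMap

variable {S : Type} (M : MarkovMap S)

/-- A (nonempty) word is admissible if every transition `ω_j → ω_{j+1}` satisfies
`f(Δ_{ω_j}) ⊇ Δ_{ω_{j+1}}`. -/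
def Adm (w : List S) : Prop :=
  w ≠ [] ∧ w.Chain' fun a b => M.Δ b ⊆ M.f '' M.Δ a

/-- The cylinder `Δ_ω = ⋂_{j<n} f^{−j}(Δ_{ω_j})` of a word `ω`. -/
def cyl (w : List S) : Set ℝ :=
  {x | ∀ j : Fin w.length, M.f^[(j : ℕ)] x ∈ M.Δ (w.get j)}

/-- Uniform decay of cylinders: `sup_{ω ∈ Eⁿ} |Δ_ω| → 0` as `n → ∞`. -/
def UniformDecay : Prop :=
  ∀ ε : ℝ, 0 < ε → ∃ N : ℕ, ∀ w : List S, M.Adm w → N ≤ w.length →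
    Metric.diam (M.cyl w) < ε

/-- Finite irreducibility: there is a finite set `Λ` of words, each empty or
admissible, such that any two admissible words can be admissibly joined by some
`λ ∈ Λ`. -/
def FinIrr : Prop :=
  ∃ Λ : Finset (List S), (∀ l ∈ Λ, l = [] ∨ M.Adm l) ∧
    ∀ w v : List S, M.Adm w → M.Adm v → ∃ l ∈ Λ, M.Adm (w ++ l ++ v)

/-- `f` is non-uniformly expanding: `|f'| > 1` everywhere except at finitely many
pairs `(a, x_a)` with `x_a ∈ Δ_a` and `|f_a'(x_a)| = 1`. -/
def NonUnifExp : Prop :=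
  ∃ N : Set (S × ℝ), N.Finite ∧
    (∀ p ∈ N, p.2 ∈ M.Δ p.1 ∧ |M.f' p.1 p.2| = 1) ∧
    ∀ a, ∀ x ∈ M.Δ a, (a, x) ∉ N → 1 < |M.f' a x|

/-- Birkhoff sum `S_n φ = Σ_{j<n} φ ∘ f^j`. -/
noncomputable def birk (φ : ℝ → ℝ) (n : ℕ) (x : ℝ) : ℝ :=
  ∑ j ∈ Finset.range n, φ (M.f^[j] x)

/-- `φ` belongs to the class `𝓕`: there is a bound `D n` on `S_nφ(x) − S_nφ(y)`
over pairs `x, y` in a common `n`-cylinder (in particular `D_1(φ) < ∞`), with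
`D n / n → 0` (i.e. `D_n(φ) = o(n)`). -/
def MemF (φ : ℝ → ℝ) : Prop :=
  ∃ D : ℕ → ℝ,
    (∀ w : List S, M.Adm w → ∀ x ∈ M.cyl w, ∀ y ∈ M.cyl w,
      M.birk φ w.length x - M.birk φ w.length y ≤ D w.length) ∧
    Tendsto (fun n : ℕ => D n / n) atTop (nhds 0)

/-- The Birkhoff sum of `log |f'|` along a word, using the branch derivatives. -/
noncomputable def logDerivSum (w : List S) (x : ℝ) : ℝ :=
  ∑ j : Fin w.length, Real.log |M.f' (w.get j) (M.f^[(j : ℕ)] x)|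

/-- Mild distortion: `log |f'| ∈ 𝓕`. -/
def MildDistortion : Prop :=
  ∃ D : ℕ → ℝ,
    (∀ w : List S, M.Adm w → ∀ x ∈ M.cyl w, ∀ y ∈ M.cyl w,
      M.logDerivSum w x - M.logDerivSum w y ≤ D w.length) ∧
    Tendsto (fun n : ℕ => D n / n) atTop (nhds 0)

/-- The maximal invariant set `J = ⋂_{n≥0} f^{−n}(Δ)`. -/
def Jset : Set ℝ := {x | ∀ n : ℕ, M.f^[n] x ∈ ⋃ a, M.Δ a}

open Classical in
/-- The function `log |f'|` on `Δ` (via a choice of branch), extended by `0`. -/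
noncomputable def logDerivFn (x : ℝ) : ℝ :=
  if h : ∃ a, x ∈ M.Δ a then Real.log |M.f' h.choose x| else 0

end MarkovMap

namespace MarkovMap

open Metric

variable {S : Type} (M : MarkovMap S)

def Transition (a b : S) : Prop := M.Δ b ⊆ M.f '' M.Δ a

theorem Adm.isChain {w : List S} (hw : M.Adm w) : w.IsChain M.Transition := hw.2

theorem adm_singleton (a : S) : M.Adm [a] := ⟨List.cons_ne_nil a [], List.isChain_singleton a⟩

theorem isBounded_image (a : S) : Bornology.IsBounded (M.f '' M.Δ a) :=
  (isBounded_Icc (0 : ℝ) 1).subset (M.maps_unit a).image_subset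

theorem isBounded_Δ (a : S) : Bornology.IsBounded (M.Δ a) :=
  (isBounded_Icc (0 : ℝ) 1).subset (M.subset_unit a)

theorem exists_deriv_bound {T : Set S} (hT : T.Finite) :
    ∃ K : ℝ, 1 ≤ K ∧ ∀ t ∈ T, ∀ x ∈ M.Δ t, |M.f' t x| ≤ K := by
  choose C hC using M.derivBdd
  obtain ⟨K, hK⟩ := (hT.image C).bddAbove
  exact ⟨max K 1, le_max_right K 1, fun t ht x hx =>
    (hC t x hx).trans ((hK ⟨t, ht, rfl⟩).trans (le_max_left K 1))⟩

theorem diam_pos_of_interior_nonempty {a : S} (ha : (interior (M.Δ a)).Nonempty) :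
    0 < diam (M.Δ a) :=
  diam_pos ((M.conn a).convex.nontrivial_iff_nonempty_interior.mpr ha) (M.isBounded_Δ a)

theorem diam_image_le_mul_diam {a : S} {K : ℝ} (hK : ∀ x ∈ M.Δ a, |M.f' a x| ≤ K) :
    diam (M.f '' M.Δ a) ≤ K * diam (M.Δ a) := by
  obtain ⟨x₀, hx₀⟩ := M.nonempty a
  have hK0 : 0 ≤ K := (abs_nonneg _).trans (hK x₀ hx₀)
  refine diam_le_of_forall_dist_le (by positivity) ?_
  rintro _ ⟨x, hx, rfl⟩ _ ⟨y, hy, rfl⟩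
  calc dist (M.f x) (M.f y) ≤ K * dist x y :=
        (M.conn a).convex.norm_image_sub_le_of_norm_hasDerivWithin_le
          (fun z hz => M.hasDeriv a z hz) (fun z hz => hK z hz) hy hx
    _ ≤ K * diam (M.Δ a) := by
        gcongr
        exact dist_le_diam_of_mem (M.isBounded_Δ a) hx hy

theorem diam_le_pow_mul_diam_image {K : ℝ} (hK : 0 ≤ K) {c : S} :
    ∀ {a : S} {v : List S}, (a :: (v ++ [c])).IsChain M.Transition →
      (∀ t ∈ v, ∀ x ∈ M.Δ t, |M.f' t x| ≤ K) →
      diam (M.Δ c) ≤ K ^ v.length * diam (M.f '' M.Δ a)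
  | a, [], hchain, _ => by
    simpa using diam_mono (List.isChain_cons_cons.mp hchain).1 (M.isBounded_image a)
  | a, t :: v, hchain, hbound => by
    obtain ⟨hat, hchain⟩ := List.isChain_cons_cons.mp hchain
    calc diam (M.Δ c)
        ≤ K ^ v.length * diam (M.f '' M.Δ t) :=
          diam_le_pow_mul_diam_image hK hchain fun s hs => hbound s (List.mem_cons_of_mem t hs)
      _ ≤ K ^ v.length * (K * diam (M.Δ t)) := by
          gcongr; exact M.diam_image_le_mul_diam (hbound t List.mem_cons_self)
      _ ≤ K ^ v.length * (K * diam (M.f '' M.Δ a)) := by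
          gcongr; exact diam_mono hat (M.isBounded_image a)
      _ = K ^ (t :: v).length * diam (M.f '' M.Δ a) := by
          rw [List.length_cons, pow_succ, mul_assoc]

theorem cyl_cons (a : S) (w : List S) : M.cyl (a :: w) = M.Δ a ∩ M.f ⁻¹' M.cyl w := by
  ext x
  simp [cyl, Fin.forall_fin_succ, Function.iterate_succ_apply]

theorem cyl_singleton (a : S) : M.cyl [a] = M.Δ a := by
  simp [cyl]

theorem image_iterate_cyl_eq : ∀ {w : List S} (hw : M.Adm w),
    M.f^[w.length] '' M.cyl w = M.f '' M.Δ (w.getLast hw.1)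
  | [a], _ => by simp [cyl_singleton]
  | a :: b :: w, hw => by
    obtain ⟨hab, hchain⟩ := List.isChain_cons_cons.mp hw.isChain
    have hcyl : M.cyl (b :: w) ⊆ M.f '' M.Δ a :=
      fun x hx => hab (by simpa [cyl] using hx ⟨0, by simp⟩)
    rw [List.getLast_cons (List.cons_ne_nil b w),
      ← image_iterate_cyl_eq ⟨List.cons_ne_nil b w, hchain⟩, List.length_cons,
      Function.iterate_succ, Set.image_comp, cyl_cons, Set.image_inter_preimage,
      Set.inter_eq_right.mpr hcyl]

end MarkovMap

theorem inf_diam_image_of_cylinders_pos_general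
    {S : Type} (M : MarkovMap S)
    (hFI : M.FinIrr)
    (b : S) (hb : (interior (M.Δ b)).Nonempty) :
    ∃ c : ℝ, 0 < c ∧
      (∀ w : List S, M.Adm w → c ≤ Metric.diam (M.f^[w.length] '' M.cyl w)) ∧
      (∀ a : S, c ≤ Metric.diam (M.f '' M.Δ a)) := by
  obtain ⟨Λ, -, hjoin⟩ := hFI
  obtain ⟨K, hK, hbound⟩ := M.exists_deriv_bound
    (Λ.finite_toSet.biUnion fun l _ => l.finite_toSet)
  have hdiam := M.diam_pos_of_interior_nonempty hb
  set m := Λ.sup List.length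
  have key : ∀ a : S, Metric.diam (M.Δ b) / K ^ m ≤ Metric.diam (M.f '' M.Δ a) := by
    intro a
    obtain ⟨l, hl, hadm⟩ := hjoin [a] [b] (M.adm_singleton a) (M.adm_singleton b)
    rw [div_le_iff₀ (by positivity), mul_comm]
    calc Metric.diam (M.Δ b)
        ≤ K ^ l.length * Metric.diam (M.f '' M.Δ a) :=
          M.diam_le_pow_mul_diam_image (by positivity) (by simpa using hadm.isChain)
            fun t ht => hbound t (Set.mem_biUnion hl ht)
      _ ≤ K ^ m * Metric.diam (M.f '' M.Δ a) := by
          gcongr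
          exact Finset.le_sup hl
  refine ⟨_, by positivity, fun w hw => ?_, key⟩
  rw [M.image_iterate_cyl_eq hw]
  exact key _

/-- **Uniform lower bound on images of cylinders** (Lemma 4.6). Let `f` be a finitely
irreducible non-uniformly expanding Markov map such that some partition element `Δ_b`
has nonempty interior. Then `inf_{ω ∈ E*} diam (f^{|ω|}(Δ_ω)) > 0`; equivalently
`inf_{a ∈ S} diam (f(Δ_a)) > 0`. -/
theorem inf_diam_image_of_cylinders_pos
    {S : Type} [Countable S] (M : MarkovMap S)
    (hFI : M.FinIrr) (hNE : M.NonUnifExp)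
    (b : S) (hb : (interior (M.Δ b)).Nonempty) :
    ∃ c : ℝ, 0 < c ∧
      (∀ w : List S, M.Adm w → c ≤ Metric.diam (M.f^[w.length] '' M.cyl w)) ∧
      (∀ a : S, c ≤ Metric.diam (M.f '' M.Δ a)) :=
  inf_diam_image_of_cylinders_pos_general M hFI b hb
end

section
/- The Rényi map has mild distortion: for ψ(x) = log f'(x) = −2·log(1−x) one has D_1(ψ) < ∞ and D_n(ψ)/n → 0 as n → ∞; equivalently, (1/n)·sup over words w of length n of sup_{x,y ∈ Δ_w} log( (fⁿ)'(x) / (fⁿ)'(y) ) tends to 0, where (fⁿ)'(x) = ∏_{j=0}^{n−1} (1 − f^j(x))^{−2}. -/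
open Filter MeasureTheory Set

/-- The Rényi (backward continued fraction) map `f(x) = 1/(1−x) − ⌊1/(1−x)⌋`. -/
noncomputable def renyi (x : ℝ) : ℝ := 1 / (1 - x) - (⌊1 / (1 - x)⌋ : ℤ)

/-- The `j`-th backward continued fraction digit (`j ≥ 1`):
`b_j(x) = ⌊1/(1 − f^{j−1}(x))⌋ + 1`. -/
noncomputable def bcf (j : ℕ) (x : ℝ) : ℤ := ⌊1 / (1 - renyi^[j - 1] x)⌋ + 1

/-- Birkhoff sum `S_n φ = Σ_{j=0}^{n-1} φ ∘ f^j` for the Rényi map. -/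
noncomputable def birkR (φ : ℝ → ℝ) (n : ℕ) (x : ℝ) : ℝ :=
  ∑ j ∈ Finset.range n, φ (renyi^[j] x)

/-- The derivative of the `n`-th iterate of the Rényi map:
`(fⁿ)'(x) = ∏_{j=0}^{n−1} (1 − f^j(x))^{−2}`. -/
noncomputable def renyiDn (n : ℕ) (x : ℝ) : ℝ :=
  ∏ j ∈ Finset.range n, ((1 - renyi^[j] x)⁻¹) ^ 2

/-- The cylinder `Δ_w = {x ∈ [0,1) : b_j(x) = w_j for 1 ≤ j ≤ n}` of a word
`w` of length `n` of integers. -/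
def rcyl (n : ℕ) (w : Fin n → ℤ) : Set ℝ :=
  {x ∈ Set.Ico (0 : ℝ) 1 | ∀ i : Fin n, bcf ((i : ℕ) + 1) x = w i}

/-- `φ` belongs to the class `𝓕` for the Rényi map: there is a bound `D n` on
`S_nφ(x) − S_nφ(y)` over pairs `x, y` in a common `n`-cylinder (in particular
`D_1(φ) < ∞`), with `D n / n → 0` (i.e. `D_n(φ) = o(n)`). -/
def MemFR (φ : ℝ → ℝ) : Prop :=
  ∃ D : ℕ → ℝ,
    (∀ n : ℕ, ∀ w : Fin n → ℤ, (∀ i, 2 ≤ w i) →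
      ∀ x ∈ rcyl n w, ∀ y ∈ rcyl n w, birkR φ n x - birkR φ n y ≤ D n) ∧
    Tendsto (fun n : ℕ => D n / n) atTop (nhds 0)

/-! On a cylinder of length `n` the iterate `fⁿ` is a single Möbius branch, so the product
`∏_{j<n} (1 − f^j x)⁻¹`, whose doubled logarithm is `S_nψ(x)`, is an affine function
`c·fⁿ(x) + d` of `fⁿ(x) ∈ [0,1)` with `c ≤ n·d`. Hence `S_nψ` varies by at most
`2 log(n+1)` on the cylinder, which is `o(n)`. -/

lemma renyi_eq_fract (x : ℝ) : renyi x = Int.fract (1 / (1 - x)) := rfl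

lemma renyi_mem_Ico (x : ℝ) : renyi x ∈ Ico (0 : ℝ) 1 := by
  rw [renyi_eq_fract]
  exact ⟨Int.fract_nonneg _, Int.fract_lt_one _⟩

lemma iterate_renyi_mem_Ico {x : ℝ} (hx : x ∈ Ico (0 : ℝ) 1) :
    ∀ j, renyi^[j] x ∈ Ico (0 : ℝ) 1
  | 0 => hx
  | j + 1 => by rw [Function.iterate_succ_apply']; exact renyi_mem_Ico _

lemma inv_one_sub_eq_renyi_add_floor (x : ℝ) : (1 - x)⁻¹ = renyi x + ⌊1 / (1 - x)⌋ := by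
  rw [renyi_eq_fract, Int.fract_add_floor, one_div]

lemma mem_rcyl_succ {n : ℕ} {w : Fin (n + 1) → ℤ} {x : ℝ} :
    x ∈ rcyl (n + 1) w ↔ x ∈ rcyl n (fun i => w i.castSucc) ∧ bcf (n + 1) x = w (Fin.last n) := by
  simp only [rcyl, mem_ofPred_eq, Fin.forall_fin_succ', Fin.val_castSucc, Fin.val_last, and_assoc]

lemma inv_one_sub_iterate_of_mem_rcyl {n : ℕ} {w : Fin (n + 1) → ℤ} {x : ℝ}
    (hx : x ∈ rcyl (n + 1) w) :
    (1 - renyi^[n] x)⁻¹ = renyi^[n + 1] x + (w (Fin.last n) - 1) := by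
  have hdigit : ⌊1 / (1 - renyi^[n] x)⌋ + 1 = w (Fin.last n) := (mem_rcyl_succ.1 hx).2
  rw [inv_one_sub_eq_renyi_add_floor, Function.iterate_succ_apply', ← hdigit]
  push_cast
  ring

lemma affine_mul_inv_one_sub {c d s t b : ℝ} (hs : 1 - s ≠ 0) (hst : (1 - s)⁻¹ = t + (b - 1)) :
    (c * s + d) * (1 - s)⁻¹ = (c + d) * t + (d * (b - 1) + c * (b - 2)) :=
  calc (c * s + d) * (1 - s)⁻¹ = (c + d) * (1 - s)⁻¹ - c * ((1 - s) * (1 - s)⁻¹) := by ring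
    _ = (c + d) * t + (d * (b - 1) + c * (b - 2)) := by rw [mul_inv_cancel₀ hs, hst]; ring

lemma exists_prod_inv_one_sub_iterate_eq_affine (n : ℕ) (w : Fin n → ℤ) (hw : ∀ i, 2 ≤ w i) :
    ∃ c d : ℝ, 0 ≤ c ∧ 0 < d ∧ c ≤ n * d ∧
      ∀ x ∈ rcyl n w, ∏ j ∈ Finset.range n, (1 - renyi^[j] x)⁻¹ = c * renyi^[n] x + d := by
  induction n with
  | zero => exact ⟨0, 1, le_rfl, one_pos, by simp, fun x _ => by simp⟩
  | succ n ih =>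
    obtain ⟨c, d, hc, hd, hcd, hprod⟩ := ih (fun i => w i.castSucc) (fun i => hw _)
    have hb : (2 : ℝ) ≤ w (Fin.last n) := by exact_mod_cast hw (Fin.last n)
    refine ⟨c + d, d * (w (Fin.last n) - 1) + c * (w (Fin.last n) - 2), by positivity,
      by nlinarith, ?_, fun x hx => ?_⟩
    · have hgap : 0 ≤ ((n : ℝ) + 1) * ((c + d) * (w (Fin.last n) - 2)) := by
        have := sub_nonneg.2 hb
        positivity
      push_cast
      nlinarith
    · have hs : 1 - renyi^[n] x ≠ 0 := (sub_pos.2 (iterate_renyi_mem_Ico hx.1 n).2).ne'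
      rw [Finset.prod_range_succ, hprod x (mem_rcyl_succ.1 hx).1]
      exact affine_mul_inv_one_sub hs (inv_one_sub_iterate_of_mem_rcyl hx)

lemma birkR_neg_two_mul_log_one_sub {x : ℝ} (hx : x ∈ Ico (0 : ℝ) 1) (n : ℕ) :
    birkR (fun x => -2 * Real.log (1 - x)) n x
      = 2 * Real.log (∏ j ∈ Finset.range n, (1 - renyi^[j] x)⁻¹) := by
  have hne : ∀ j ∈ Finset.range n, (1 - renyi^[j] x)⁻¹ ≠ 0 := fun j _ =>
    inv_ne_zero (sub_pos.2 (iterate_renyi_mem_Ico hx j).2).ne'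
  rw [Real.log_prod hne, Finset.mul_sum, birkR]
  simp only [Real.log_inv]
  ring_nf

lemma log_affine_sub_log_affine_le {N c d s t : ℝ} (hc : 0 ≤ c) (hd : 0 < d) (hcd : c ≤ N * d)
    (hs : s ∈ Icc (0 : ℝ) 1) (ht : 0 ≤ t) :
    Real.log (c * s + d) - Real.log (c * t + d) ≤ Real.log (N + 1) := by
  have hs' : 0 < c * s + d := by nlinarith [hs.1]
  have ht' : 0 < c * t + d := by nlinarith
  have hN : 0 ≤ N := nonneg_of_mul_nonneg_left (hc.trans hcd) hd
  rw [← Real.log_div hs'.ne' ht'.ne']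
  refine Real.log_le_log (div_pos hs' ht') ((div_le_iff₀ ht').2 ?_)
  nlinarith [mul_le_of_le_one_right hc hs.2, mul_nonneg (mul_nonneg hN hc) ht, mul_nonneg hc ht]

lemma tendsto_two_mul_log_add_one_div_atTop :
    Tendsto (fun n : ℕ => 2 * Real.log (n + 1) / n) atTop (nhds 0) := by
  have h := (Real.tendsto_pow_log_div_mul_add_atTop 1 (-1) 1 one_ne_zero).comp
    (tendsto_atTop_add_const_right atTop 1 tendsto_natCast_atTop_atTop)
  simpa [mul_div_assoc] using h.const_mul 2

/-- **Mild distortion for the Rényi map**: the observable `ψ(x) = log f'(x)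
= −2 log(1−x)` belongs to the class `𝓕`, i.e. `D_1(ψ) < ∞` and `D_n(ψ)/n → 0`
(equivalently, `(1/n) sup_w sup_{x,y∈Δ_w} log((fⁿ)'(x)/(fⁿ)'(y)) → 0`). -/
theorem renyi_mild_distortion :
    MemFR (fun x : ℝ => -2 * Real.log (1 - x)) := by
  refine ⟨fun n => 2 * Real.log (n + 1), fun n w hw x hx y hy => ?_,
    tendsto_two_mul_log_add_one_div_atTop⟩
  obtain ⟨c, d, hc, hd, hcd, hprod⟩ := exists_prod_inv_one_sub_iterate_eq_affine n w hw
  rw [birkR_neg_two_mul_log_one_sub hx.1, birkR_neg_two_mul_log_one_sub hy.1, hprod x hx,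
    hprod y hy, ← mul_sub]
  exact mul_le_mul_of_nonneg_left (log_affine_sub_log_affine_le hc hd hcd
    (Ico_subset_Icc_self (iterate_renyi_mem_Ico hx.1 n)) (iterate_renyi_mem_Ico hy.1 n).1)
    zero_le_two
end
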